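/- arXiv:2309.07368 — 2 statements merged into one kernel-verified Lean document; each statement's English description precedes it below -/
import Mathlib

section
/- Energization preserves HD2: if h(q,·) is HD2, M_L(q,·) is HD0 (M_L(q, c qd) = M_L(q, qd) for c > 0), and ξ_L(q,·) is HD2, then the energized map h̃(q, qd) = h(q,qd) - ((qd^T(M_L h + ξ_L))/(qd^T M_L qd)) qd satisfies h̃(q, c qd) = c² h̃(q, qd) for all c > 0 and qd ≠ 0. -/
open Matrix

/-- Energization preserves HD2. -/
theorem stmt_10 {n : ℕ}
    (h ξ : (Fin n → ℝ) → (Fin n → ℝ) → (Fin n → ℝ))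
    (ML : (Fin n → ℝ) → (Fin n → ℝ) → Matrix (Fin n) (Fin n) ℝ)
    (hML : ∀ q qd, qd ≠ 0 → (ML q qd).PosDef)
    (hHD2h : ∀ q qd (c : ℝ), qd ≠ 0 → 0 < c → h q (c • qd) = c ^ 2 • h q qd)
    (hHD2ξ : ∀ q qd (c : ℝ), qd ≠ 0 → 0 < c → ξ q (c • qd) = c ^ 2 • ξ q qd)
    (hHD0M : ∀ q qd (c : ℝ), qd ≠ 0 → 0 < c → ML q (c • qd) = ML q qd)
    (ht : (Fin n → ℝ) → (Fin n → ℝ) → (Fin n → ℝ))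
    (hEn : ∀ q qd, qd ≠ 0 → ht q qd =
      h q qd - ((qd ⬝ᵥ (ML q qd *ᵥ h q qd + ξ q qd)) / (qd ⬝ᵥ ML q qd *ᵥ qd)) • qd) :
    ∀ q qd (c : ℝ), qd ≠ 0 → 0 < c → ht q (c • qd) = c ^ 2 • ht q qd := by
  intro q qd c hqd hc
  have hcne : c ≠ 0 := ne_of_gt hc
  have hcqd : c • qd ≠ 0 := smul_ne_zero hcne hqd
  rw [hEn _ _ hcqd, hEn _ _ hqd, hHD2h _ _ _ hqd hc, hHD2ξ _ _ _ hqd hc,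
    hHD0M _ _ _ hqd hc]
  set a := qd ⬝ᵥ (ML q qd *ᵥ h q qd + ξ q qd) with ha
  set b := qd ⬝ᵥ ML q qd *ᵥ qd with hb
  have e1 : (c • qd) ⬝ᵥ (ML q qd *ᵥ (c ^ 2 • h q qd) + c ^ 2 • ξ q qd)
      = c ^ 3 * a := by
    simp only [ha, Matrix.mulVec_smul, smul_dotProduct, dotProduct_smul,
      dotProduct_add, smul_eq_mul]
    ring
  have e2 : (c • qd) ⬝ᵥ ML q qd *ᵥ (c • qd) = c ^ 2 * b := by
    simp only [hb, Matrix.mulVec_smul, smul_dotProduct, dotProduct_smul, smul_eq_mul]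
    ring
  rw [e1, e2, smul_smul, smul_sub, smul_smul]
  congr 1
  rw [div_mul_eq_mul_div, show c ^ 3 * a * c = c ^ 2 * (c ^ 2 * a) by ring,
    mul_div_mul_left _ _ (pow_ne_zero 2 hcne), mul_div_assoc]
end

section
/- Compatibility forces the navigation term to vanish at stationarity: let v be a unit vector, M_L symmetric positive definite, A = v v^T/(v^T M_L v), P = I - A M_L. Suppose f, g ∈ R^n satisfy P f + A g = 0, and the compatibility conditions hold: (g = 0 ↔ f = 0) and (f ≠ 0 → ⟪g, f⟫ > 0). Then f = 0 and g = 0. -/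
open Matrix

lemma vecMulVec_mulVec' {n : ℕ} (w v x : Fin n → ℝ) :
    vecMulVec w v *ᵥ x = (v ⬝ᵥ x) • w := by
  funext i
  simp [vecMulVec_apply, mulVec, dotProduct, Finset.sum_mul, mul_comm, mul_assoc, mul_left_comm, Finset.mul_sum]

/-- Compatibility forces the navigation term to vanish at stationarity. -/
theorem stmt_16 {n : ℕ} (v : Fin n → ℝ) (hv : v ⬝ᵥ v = 1)
    (ML : Matrix (Fin n) (Fin n) ℝ) (hML : ML.PosDef)
    (A P : Matrix (Fin n) (Fin n) ℝ)
    (hA : A = (v ⬝ᵥ ML *ᵥ v)⁻¹ • vecMulVec v v)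
    (hP : P = 1 - A * ML)
    (f g : Fin n → ℝ)
    (hstat : P *ᵥ f + A *ᵥ g = 0)
    (hcompat1 : g = 0 ↔ f = 0)
    (hcompat2 : f ≠ 0 → 0 < g ⬝ᵥ f) :
    f = 0 ∧ g = 0 := by
  have hv0 : v ≠ 0 := by
    intro h; rw [h] at hv; simp at hv
  set c : ℝ := v ⬝ᵥ ML *ᵥ v with hc
  have hcpos : 0 < c := by
    have := hML.dotProduct_mulVec_pos hv0
    simpa [hc] using this
  have hcne : c ≠ 0 := ne_of_gt hcpos
  have hAx : ∀ x : Fin n → ℝ, A *ᵥ x = (c⁻¹ * (v ⬝ᵥ x)) • v := by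
    intro x
    rw [hA, smul_mulVec, vecMulVec_mulVec', smul_smul]
  have h1 : P *ᵥ f = f - (c⁻¹ * (v ⬝ᵥ ML *ᵥ f)) • v := by
    rw [hP, sub_mulVec, one_mulVec, ← mulVec_mulVec, hAx]
  rw [h1, hAx] at hstat
  set α : ℝ := c⁻¹ * (v ⬝ᵥ ML *ᵥ f) - c⁻¹ * (v ⬝ᵥ g) with hα
  have hfα : f = α • v := by
    funext i
    have := congrFun hstat i
    simp [Pi.add_apply, Pi.sub_apply, Pi.smul_apply, smul_eq_mul, hα] at this ⊢
    linarith
  by_cases hf : f = 0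
  · exact ⟨hf, hcompat1.mpr hf⟩
  · exfalso
    have hMLf : v ⬝ᵥ ML *ᵥ f = α * c := by
      rw [hfα, mulVec_smul, dotProduct_smul, smul_eq_mul, hc]
    have hvg : v ⬝ᵥ g = 0 := by
      have h2 := hα
      rw [hMLf] at h2
      field_simp at h2
      linarith
    have hgf : g ⬝ᵥ f = 0 := by
      rw [hfα, dotProduct_smul, smul_eq_mul, dotProduct_comm, hvg, mul_zero]
    have := hcompat2 hf
    rw [hgf] at this
    exact lt_irrefl 0 this
end
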